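/- Fix d,r,t∈ℕ and p∈[1,∞]. Let μ⃗=(μ^1,…,μ^t) be a vector of finite complex Borel measures on ℝ^d, let Φ=(φ^1,…,φ^r) with each φ^i∈W₀^1 satisfy the Riesz condition for p, and let X={x_j : j∈J} be a separated μ⃗-sampling set for V^p(Φ). Then there exists ε₀>0 such that for every vector α⃗=(α^1,…,α^t) of finite complex Borel measures with ‖μ⃗−α⃗‖<ε₀, X is an α⃗-sampling set for V^p(Φ); that is, there exist 0<A'_p≤B'_p<∞ with A'_p‖f‖_{L^p} ≤ ∑_{l=1}^t ‖((f∗α^l)(x_j))_{j∈J}‖_{ℓ^p(J)} ≤ B'_p‖f‖_{L^p} for all f∈V^p(Φ). -/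

import Mathlib

open MeasureTheory ENNReal

noncomputable section

abbrev Euc (d : ℕ) := EuclideanSpace ℝ (Fin d)

/-- Embedding of `ℤ^d` into `ℝ^d`. -/
def zemb {d : ℕ} (k : Fin d → ℤ) : Euc d := WithLp.toLp 2 (fun i => (k i : ℝ))

/-- `ess sup_{x ∈ [0,1]^d} |f(x+k)|`, valued in `ℝ≥0∞`. -/
def cubeSup {d : ℕ} (f : Euc d → ℂ) (k : Fin d → ℤ) : ℝ≥0∞ :=
  essSup (fun x => (‖f (x + zemb k)‖₊ : ℝ≥0∞))
    (volume.restrict {x : Euc d | ∀ i, x i ∈ Set.Icc (0:ℝ) 1})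

/-- The Wiener amalgam norm `‖f‖_{W^p}`. -/
def WNorm {d : ℕ} (p : ℝ≥0∞) (f : Euc d → ℂ) : ℝ≥0∞ :=
  if p = ∞ then ⨆ k : Fin d → ℤ, cubeSup f k
  else (∑' k : Fin d → ℤ, cubeSup f k ^ p.toReal) ^ (1 / p.toReal)

/-- Membership in `W₀^1`: continuous with finite `W^1` norm. -/
def MemW01 {d : ℕ} (f : Euc d → ℂ) : Prop := Continuous f ∧ WNorm 1 f < ∞

/-- `(W^1)^{(r)}` norm of a vector of functions. -/
def WNormVec {d r : ℕ} (Φ : Fin r → Euc d → ℂ) : ℝ≥0∞ := ∑ i, WNorm 1 (Φ i)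

/-- the `ℓ^p` norm of a family of complex numbers, valued in `ℝ≥0∞`. -/
def lpNorm {ι : Type*} (p : ℝ≥0∞) (c : ι → ℂ) : ℝ≥0∞ :=
  if p = ∞ then ⨆ j, (‖c j‖₊ : ℝ≥0∞)
  else (∑' j, (‖c j‖₊ : ℝ≥0∞) ^ p.toReal) ^ (1 / p.toReal)

/-- The `(ℓ^p(ℤ^d))^{(r)}` norm `‖C‖ = ∑_i ‖c^i‖_{ℓ^p}`. -/
def vlpNorm {d r : ℕ} (p : ℝ≥0∞) (C : Fin r → (Fin d → ℤ) → ℂ) : ℝ≥0∞ :=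
  ∑ i, lpNorm p (C i)

/-- `f_C = ∑_{k ∈ ℤ^d} ∑_i c^i(k) φ^i(· - k)`. -/
def genFun {d r : ℕ} (Φ : Fin r → Euc d → ℂ) (C : Fin r → (Fin d → ℤ) → ℂ)
    (x : Euc d) : ℂ :=
  ∑' k : Fin d → ℤ, ∑ i, C i k * Φ i (x - zemb k)

/-- Integral of a complex-valued function against a finite complex Borel measure,
via the Jordan decompositions of the real and imaginary parts. -/
def cInt {d : ℕ} (μ : ComplexMeasure (Euc d)) (f : Euc d → ℂ) : ℂ :=
  ((∫ x, f x ∂(ComplexMeasure.re μ).toJordanDecomposition.posPart) -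
    (∫ x, f x ∂(ComplexMeasure.re μ).toJordanDecomposition.negPart)) +
  Complex.I * ((∫ x, f x ∂(ComplexMeasure.im μ).toJordanDecomposition.posPart) -
    (∫ x, f x ∂(ComplexMeasure.im μ).toJordanDecomposition.negPart))

/-- The convolution `(φ ∗ μ)(x) = ∫ φ(x - y) dμ(y)`. -/
def mconv {d : ℕ} (μ : ComplexMeasure (Euc d)) (φ : Euc d → ℂ) (x : Euc d) : ℂ :=
  cInt μ (fun y => φ (x - y))

/-- The total variation norm `|μ|(ℝ^d)` of a finite complex Borel measure, as the
supremum of `∑ ‖μ(S_i)‖` over finite disjoint families of measurable sets. -/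
def cmNorm {d : ℕ} (μ : ComplexMeasure (Euc d)) : ℝ≥0∞ :=
  ⨆ (n : ℕ) (S : Fin n → Set (Euc d)) (_ : ∀ i, MeasurableSet (S i))
    (_ : Pairwise (Function.onFun Disjoint S)), ∑ i, (‖μ (S i)‖₊ : ℝ≥0∞)

/-- norm of a vector of complex measures. -/
def cmNormVec {d t : ℕ} (μ : Fin t → ComplexMeasure (Euc d)) : ℝ≥0∞ :=
  ∑ l, cmNorm (μ l)

/-- The Riesz condition with explicit constants. -/
def RieszWith {d r : ℕ} (p : ℝ≥0∞) (Φ : Fin r → Euc d → ℂ) (m M : ℝ) : Prop :=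
  0 < m ∧ m ≤ M ∧ ∀ C : Fin r → (Fin d → ℤ) → ℂ, vlpNorm p C < ∞ →
    ENNReal.ofReal m * vlpNorm p C ≤ eLpNorm (genFun Φ C) p volume ∧
    eLpNorm (genFun Φ C) p volume ≤ ENNReal.ofReal M * vlpNorm p C

/-- The Riesz (unconditional basis) condition for `p`. -/
def RieszCond {d r : ℕ} (p : ℝ≥0∞) (Φ : Fin r → Euc d → ℂ) : Prop :=
  ∃ m M : ℝ, RieszWith p Φ m M

/-- `X` is a `μ⃗`-sampling set for `V^p(Φ)`. -/
def SamplingSet {d r t : ℕ} {J : Type*} (p : ℝ≥0∞) (Φ : Fin r → Euc d → ℂ)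
    (μ : Fin t → ComplexMeasure (Euc d)) (X : J → Euc d) : Prop :=
  ∃ A B : ℝ, 0 < A ∧ A ≤ B ∧ ∀ C : Fin r → (Fin d → ℤ) → ℂ, vlpNorm p C < ∞ →
    ENNReal.ofReal A * eLpNorm (genFun Φ C) p volume ≤
      ∑ l, lpNorm p (fun j => mconv (μ l) (genFun Φ C) (X j)) ∧
    ∑ l, lpNorm p (fun j => mconv (μ l) (genFun Φ C) (X j)) ≤
      ENNReal.ofReal B * eLpNorm (genFun Φ C) p volume

/-- `X` is separated with constant `δ`. -/
def SeparatedWith {d : ℕ} {J : Type*} (X : J → Euc d) (δ : ℝ) : Prop :=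
  ∀ i j : J, i ≠ j → δ ≤ dist (X i) (X j)

def SeparatedSet {d : ℕ} {J : Type*} (X : J → Euc d) : Prop :=
  ∃ δ : ℝ, 0 < δ ∧ SeparatedWith X δ

/-- Membership in `M_s(ℝ^d)`: `∫ (1+|x|)^s d|μ| < ∞`, expressed via the Jordan
decompositions of the real and imaginary parts. -/
def MemMs {d : ℕ} (s : ℝ) (μ : ComplexMeasure (Euc d)) : Prop :=
  (∫⁻ x, ENNReal.ofReal ((1 + ‖x‖) ^ s) ∂(ComplexMeasure.re μ).toJordanDecomposition.posPart < ∞) ∧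
  (∫⁻ x, ENNReal.ofReal ((1 + ‖x‖) ^ s) ∂(ComplexMeasure.re μ).toJordanDecomposition.negPart < ∞) ∧
  (∫⁻ x, ENNReal.ofReal ((1 + ‖x‖) ^ s) ∂(ComplexMeasure.im μ).toJordanDecomposition.posPart < ∞) ∧
  (∫⁻ x, ENNReal.ofReal ((1 + ‖x‖) ^ s) ∂(ComplexMeasure.im μ).toJordanDecomposition.negPart < ∞)

/-- `Φ ∈ W_s`: an `s`-localized Riesz generator. -/
def MemWs {d r : ℕ} (s : ℝ) (Φ : Fin r → Euc d → ℂ) : Prop :=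
  (∀ i, MemW01 (Φ i)) ∧ RieszCond 2 Φ ∧
    ∀ i, ∃ C0 : ℝ, 0 < C0 ∧ ∀ x : Euc d, ‖Φ i x‖ ≤ C0 * (1 + ‖x‖) ^ (-s)

end

/-! Write `f = f_C ∈ V^p(Φ)`. The Riesz lower bound and the amalgam form of Young's inequality
give `‖f‖_{W^p} ≲ ‖C‖ ≲ ‖f‖_{L^p}`. Since `f` is continuous, `|f(x)|` is bounded by the essential
supremum of `f` on any unit cube containing `x`, and a separated set has boundedly many points in
each unit cube; hence for every finite complex measure `ν` the samples obey
`‖((f ∗ ν)(x_j))_j‖_{ℓ^p} ≲ ‖ν‖ ‖f‖_{W^p} ≲ ‖ν‖ ‖f‖_{L^p}`. For `ν = μ^l - α^l` with `‖μ⃗ - α⃗‖`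
small this changes the sampling sums by at most `A/2 ‖f‖_{L^p}`, where `A` is the lower sampling
bound of `μ⃗`, so `α⃗` is sampling with bounds `A/2` and `B + A/2`. -/

open MeasureTheory ENNReal NNReal Set

noncomputable section

section EnnLpNorm

variable {ι : Type*} {p : ℝ≥0∞}

def ennLpNorm (p : ℝ≥0∞) (a : ι → ℝ≥0∞) : ℝ≥0∞ :=
  if p = ∞ then ⨆ k, a k else (∑' k, a k ^ p.toReal) ^ (1 / p.toReal)

lemma lpNorm_eq_ennLpNorm (p : ℝ≥0∞) (c : ι → ℂ) :
    lpNorm p c = ennLpNorm p (fun j => (‖c j‖₊ : ℝ≥0∞)) := rfl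

lemma WNorm_eq_ennLpNorm {d : ℕ} (p : ℝ≥0∞) (f : Euc d → ℂ) :
    WNorm p f = ennLpNorm p (cubeSup f) := rfl

lemma ennLpNorm_of_ne_top (hp : p ≠ ∞) (a : ι → ℝ≥0∞) :
    ennLpNorm p a = (∑' k, a k ^ p.toReal) ^ (1 / p.toReal) := if_neg hp

lemma ennLpNorm_top (a : ι → ℝ≥0∞) : ennLpNorm ∞ a = ⨆ k, a k := if_pos rfl

lemma one_le_toReal_of_one_le (hp : 1 ≤ p) (hp' : p ≠ ∞) : 1 ≤ p.toReal := by
  simpa using ENNReal.toReal_mono hp' hp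

lemma ennLpNorm_mono {a b : ι → ℝ≥0∞} (h : a ≤ b) : ennLpNorm p a ≤ ennLpNorm p b := by
  unfold ennLpNorm
  split_ifs
  · exact iSup_mono h
  · gcongr with k
    exact h k

lemma le_ennLpNorm (hp : 1 ≤ p) (a : ι → ℝ≥0∞) (k : ι) : a k ≤ ennLpNorm p a := by
  rcases eq_or_ne p ∞ with rfl | hp'
  · exact (le_iSup a k).trans_eq (ennLpNorm_top a).symm
  have hq := ENNReal.toReal_pos (zero_lt_one.trans_le hp).ne' hp'
  calc a k = (a k ^ p.toReal) ^ (1 / p.toReal) := by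
        rw [← ENNReal.rpow_mul, mul_one_div_cancel hq.ne', ENNReal.rpow_one]
    _ ≤ ennLpNorm p a := by
        rw [ennLpNorm_of_ne_top hp']
        gcongr
        exact ENNReal.le_tsum k

lemma ennLpNorm_comp_equiv {ι' : Type*} (a : ι → ℝ≥0∞) (e : ι' ≃ ι) :
    ennLpNorm p (a ∘ e) = ennLpNorm p a := by
  unfold ennLpNorm
  split_ifs
  · exact e.iSup_comp (g := a)
  · exact congrArg (· ^ _) (e.tsum_eq (fun k => a k ^ p.toReal))

lemma ennLpNorm_const_mul (hp : 1 ≤ p) (c : ℝ≥0∞) (a : ι → ℝ≥0∞) :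
    ennLpNorm p (fun k => c * a k) = c * ennLpNorm p a := by
  rcases eq_or_ne p ∞ with rfl | hp'
  · simp only [ennLpNorm_top, ENNReal.mul_iSup]
  have hq := ENNReal.toReal_pos (zero_lt_one.trans_le hp).ne' hp'
  simp only [ennLpNorm_of_ne_top hp', ENNReal.mul_rpow_of_nonneg _ _ hq.le,
    ENNReal.tsum_mul_left]
  rw [ENNReal.mul_rpow_of_nonneg _ _ (by positivity), ← ENNReal.rpow_mul,
    mul_one_div_cancel hq.ne', ENNReal.rpow_one]

lemma ennLpNorm_zero (hp : 1 ≤ p) : ennLpNorm p (0 : ι → ℝ≥0∞) = 0 := by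
  rcases eq_or_ne p ∞ with rfl | hp'
  · simp [ennLpNorm_top]
  have hq := ENNReal.toReal_pos (zero_lt_one.trans_le hp).ne' hp'
  simp [ennLpNorm_of_ne_top hp', hq]

lemma ennLpNorm_add_le (hp : 1 ≤ p) (a b : ι → ℝ≥0∞) :
    ennLpNorm p (a + b) ≤ ennLpNorm p a + ennLpNorm p b := by
  rcases eq_or_ne p ∞ with rfl | hp'
  · simp only [ennLpNorm_top]
    exact iSup_le fun k => add_le_add (le_iSup a k) (le_iSup b k)
  let _ : MeasurableSpace ι := ⊤
  simp only [ennLpNorm_of_ne_top hp', ← lintegral_count]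
  exact ENNReal.lintegral_Lp_add_le (.of_discrete) (.of_discrete)
    (one_le_toReal_of_one_le hp hp')

lemma ennLpNorm_iSup {κ : Type*} [Countable κ] (hp : 1 ≤ p) {F : κ → ι → ℝ≥0∞}
    (hF : Directed (· ≤ ·) F) : ennLpNorm p (⨆ s, F s) = ⨆ s, ennLpNorm p (F s) := by
  rcases eq_or_ne p ∞ with rfl | hp'
  · simp only [ennLpNorm_top, iSup_apply]
    exact iSup_comm
  have hq := ENNReal.toReal_pos (zero_lt_one.trans_le hp).ne' hp'
  let _ : MeasurableSpace ι := ⊤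
  have hdir : Directed (· ≤ ·) fun s k => F s k ^ p.toReal := fun s t => by
    obtain ⟨u, hsu, htu⟩ := hF s t
    exact ⟨u, fun k => ENNReal.rpow_le_rpow (hsu k) hq.le,
      fun k => ENNReal.rpow_le_rpow (htu k) hq.le⟩
  have hpow (k : ι) : (⨆ s, F s k) ^ p.toReal = ⨆ s, F s k ^ p.toReal :=
    (ENNReal.orderIsoRpow _ hq).map_iSup _
  simp only [ennLpNorm_of_ne_top hp', ← lintegral_count, iSup_apply, hpow]
  rw [lintegral_iSup_directed (fun _ => .of_discrete) hdir]
  exact (ENNReal.orderIsoRpow _ (one_div_pos.2 hq)).map_iSup _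

lemma ennLpNorm_finsetSum_le {β : Type*} (hp : 1 ≤ p) (s : Finset β) (g : β → ι → ℝ≥0∞) :
    ennLpNorm p (∑ m ∈ s, g m) ≤ ∑ m ∈ s, ennLpNorm p (g m) := by
  induction s using Finset.cons_induction with
  | empty => simp [ennLpNorm_zero hp]
  | cons m s hm ih =>
    rw [Finset.sum_cons, Finset.sum_cons]
    exact (ennLpNorm_add_le hp _ _).trans (add_le_add_right ih _)

lemma ennLpNorm_tsum_le {β : Type*} [Countable β] (hp : 1 ≤ p) (g : β → ι → ℝ≥0∞) :
    ennLpNorm p (fun k => ∑' m, g m k) ≤ ∑' m, ennLpNorm p (g m) := by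
  have hdir : Directed (· ≤ ·) fun s : Finset β => ∑ m ∈ s, g m :=
    Monotone.directed_le fun s t hst => Finset.sum_le_sum_of_subset hst
  calc ennLpNorm p (fun k => ∑' m, g m k) = ennLpNorm p (⨆ s : Finset β, ∑ m ∈ s, g m) := by
        congr 1; ext k; simp [ENNReal.tsum_eq_iSup_sum, Finset.sum_apply]
    _ = ⨆ s : Finset β, ennLpNorm p (∑ m ∈ s, g m) := ennLpNorm_iSup hp hdir
    _ ≤ ∑' m, ennLpNorm p (g m) := by
        rw [ENNReal.tsum_eq_iSup_sum]
        exact iSup_mono fun s => ennLpNorm_finsetSum_le hp s g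

lemma ennLpNorm_comp_sub_right {G : Type*} [AddGroup G] (a : G → ℝ≥0∞) (m : G) :
    ennLpNorm p (fun k => a (k - m)) = ennLpNorm p a :=
  ennLpNorm_comp_equiv a (Equiv.subRight m)

lemma ennLpNorm_conv_le {G : Type*} [AddCommGroup G] [Countable G] (hp : 1 ≤ p)
    (w a : G → ℝ≥0∞) :
    ennLpNorm p (fun k => ∑' m, w m * a (k - m)) ≤ (∑' m, w m) * ennLpNorm p a :=
  calc ennLpNorm p (fun k => ∑' m, w m * a (k - m))
      ≤ ∑' m, ennLpNorm p (fun k => w m * a (k - m)) := ennLpNorm_tsum_le hp _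
    _ = (∑' m, w m) * ennLpNorm p a := by
        simp only [ennLpNorm_const_mul hp, ennLpNorm_comp_sub_right, ENNReal.tsum_mul_right]

lemma tsum_comp_le_mul_tsum {J K : Type*} {π : J → K} {N : ℕ}
    (hN : ∀ k (s : Finset J), (∀ j ∈ s, π j = k) → s.card ≤ N) (u : K → ℝ≥0∞) :
    ∑' j, u (π j) ≤ N * ∑' k, u k := by
  classical
  rw [ENNReal.tsum_eq_iSup_sum]
  refine iSup_le fun s => ?_
  rw [Finset.sum_comp]
  calc ∑ k ∈ s.image π, (s.filter (π · = k)).card • u k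
      ≤ ∑ k ∈ s.image π, N * u k := by
        gcongr with k
        rw [nsmul_eq_mul]
        gcongr
        exact_mod_cast hN k _ fun j hj => (Finset.mem_filter.mp hj).2
    _ ≤ N * ∑' k, u k := by
        rw [← Finset.mul_sum]
        gcongr
        exact ENNReal.sum_le_tsum _

lemma ennLpNorm_comp_le {J K : Type*} {π : J → K} {N : ℕ}
    (hN : ∀ k (s : Finset J), (∀ j ∈ s, π j = k) → s.card ≤ N) (hp : 1 ≤ p) (u : K → ℝ≥0∞) :
    ennLpNorm p (u ∘ π) ≤ N * ennLpNorm p u := by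
  rcases eq_or_ne p ∞ with rfl | hp'
  · simp only [ennLpNorm_top]
    refine iSup_le fun j => ?_
    have hN1 : (1 : ℝ≥0∞) ≤ N := by
      exact_mod_cast hN (π j) {j} (by simp)
    exact (le_iSup u (π j)).trans (le_mul_of_one_le_left zero_le hN1)
  have hq1 := one_le_toReal_of_one_le hp hp'
  have hq := ENNReal.toReal_pos (zero_lt_one.trans_le hp).ne' hp'
  rw [ennLpNorm_of_ne_top hp', ennLpNorm_of_ne_top hp']
  calc (∑' j, u (π j) ^ p.toReal) ^ (1 / p.toReal)
      ≤ (N * ∑' k, u k ^ p.toReal) ^ (1 / p.toReal) := by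
        gcongr
        exact tsum_comp_le_mul_tsum hN _
    _ ≤ N * (∑' k, u k ^ p.toReal) ^ (1 / p.toReal) := by
        rw [ENNReal.mul_rpow_of_nonneg _ _ (by positivity)]
        gcongr
        rcases Nat.eq_zero_or_pos N with rfl | hN0
        · simp [hq]
        calc (N : ℝ≥0∞) ^ (1 / p.toReal) ≤ (N : ℝ≥0∞) ^ (1 : ℝ) :=
              ENNReal.rpow_le_rpow_of_exponent_le (by exact_mod_cast hN0)
                ((div_le_one hq).mpr hq1)
          _ = N := ENNReal.rpow_one _

end EnnLpNorm

section Cubes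

variable {d : ℕ}

def unitCube (d : ℕ) : Set (Euc d) := {x | ∀ i, x i ∈ Icc (0 : ℝ) 1}

def zfloor (x : Euc d) : Fin d → ℤ := fun i => ⌊x i⌋

lemma sub_zemb_zfloor_mem_unitCube (x : Euc d) : x - zemb (zfloor x) ∈ unitCube d := fun i => by
  simp only [zemb, zfloor, PiLp.sub_apply, mem_Icc]
  constructor <;> linarith [Int.floor_le (x i), Int.lt_floor_add_one (x i)]

lemma convex_unitCube : Convex ℝ (unitCube d) := by
  intro x hx y hy a b ha hb hab i
  simp only [PiLp.add_apply, PiLp.smul_apply, smul_eq_mul]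
  constructor <;> nlinarith [(hx i).1, (hx i).2, (hy i).1, (hy i).2]

lemma unitCube_subset_closure_interior : unitCube d ⊆ closure (interior (unitCube d)) := by
  set V := {x : Euc d | ∀ i, x i ∈ Ioo (0 : ℝ) 1}
  have hV : IsOpen V := by
    simp only [V, ofPred_forall]
    exact isOpen_iInter_of_finite fun i => isOpen_Ioo.preimage (by fun_prop)
  have hclosed : IsClosed (unitCube d) := by
    simp only [unitCube, ofPred_forall]
    exact isClosed_iInter fun i => isClosed_Icc.preimage (by fun_prop)
  have hint : (interior (unitCube d)).Nonempty := by
    have hVsub : V ⊆ unitCube d := fun x hx i => Ioo_subset_Icc_self (hx i)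
    refine ⟨WithLp.toLp 2 fun _ => 1 / 2, interior_maximal hVsub hV fun i => ?_⟩
    norm_num
  rw [convex_unitCube.closure_interior_eq_closure_of_nonempty_interior hint, hclosed.closure_eq]

/-- Points of the closed cube are limits of interior points, and an open set meeting the interior
has positive measure. -/
lemma nnnorm_le_cubeSup {f : Euc d → ℂ} (hf : Continuous f) {k : Fin d → ℤ} {x : Euc d}
    (hx : x - zemb k ∈ unitCube d) : (‖f x‖₊ : ℝ≥0∞) ≤ cubeSup f k := by
  by_contra! hlt
  set V := {y : Euc d | cubeSup f k < ‖f (y + zemb k)‖₊}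
  have hV : IsOpen V := isOpen_lt continuous_const (by fun_prop)
  obtain ⟨y, hyV, hyQ⟩ : (V ∩ interior (unitCube d)).Nonempty :=
    mem_closure_iff.mp (unitCube_subset_closure_interior hx) V hV (by simpa [V] using hlt)
  have hnull : volume (V ∩ unitCube d) = 0 := by
    rw [← Measure.restrict_apply hV.measurableSet]
    exact measure_mono_null (fun y hy => not_le.mpr hy)
      (ae_iff.mp (ae_le_essSup (μ := volume.restrict (unitCube d)) _))
  have hpos : 0 < volume (V ∩ interior (unitCube d)) :=
    (hV.inter isOpen_interior).measure_pos volume ⟨y, hyV, hyQ⟩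
  exact hpos.ne' (measure_mono_null (inter_subset_inter_right _ interior_subset) hnull)

lemma nnnorm_le_cubeSup_zfloor {f : Euc d → ℂ} (hf : Continuous f) (x : Euc d) :
    (‖f x‖₊ : ℝ≥0∞) ≤ cubeSup f (zfloor x) :=
  nnnorm_le_cubeSup hf (sub_zemb_zfloor_mem_unitCube x)

lemma cubeSup_le_WNorm {p : ℝ≥0∞} (hp : 1 ≤ p) (f : Euc d → ℂ) (k : Fin d → ℤ) :
    cubeSup f k ≤ WNorm p f :=
  le_ennLpNorm hp (cubeSup f) k

lemma nnnorm_le_WNorm {p : ℝ≥0∞} (hp : 1 ≤ p) {f : Euc d → ℂ} (hf : Continuous f) (x : Euc d) :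
    (‖f x‖₊ : ℝ≥0∞) ≤ WNorm p f :=
  (nnnorm_le_cubeSup_zfloor hf x).trans (cubeSup_le_WNorm hp f _)

lemma zemb_sub (k m : Fin d → ℤ) : zemb (k - m) = zemb k - zemb m := by
  ext i
  simp [zemb]

lemma zfloor_sub_zemb (x : Euc d) (k : Fin d → ℤ) : zfloor (x - zemb k) = zfloor x - k := by
  ext i
  simp [zfloor, zemb]

lemma zfloor_sub_zfloor_mem_of_dist_lt {x y : Euc d} (h : dist x y < 1) :
    zfloor x - zfloor y ∈ Fintype.piFinset fun _ => Finset.Icc (-1 : ℤ) 1 := by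
  simp only [Fintype.mem_piFinset, Finset.mem_Icc, Pi.sub_apply, zfloor]
  intro i
  have hi := (PiLp.dist_apply_le x y i).trans_lt h
  rw [Real.dist_eq, abs_lt] at hi
  have h1 : (⌊x i⌋ : ℝ) < ⌊y i⌋ + 2 := by
    linarith [Int.floor_le (x i), Int.lt_floor_add_one (y i)]
  have h2 : (⌊y i⌋ : ℝ) < ⌊x i⌋ + 2 := by
    linarith [Int.floor_le (y i), Int.lt_floor_add_one (x i)]
  norm_cast at h1 h2
  omega

lemma zfloor_sub_sub_zfloor_mem (z y : Euc d) :
    zfloor z - zfloor y - zfloor (z - y) ∈ Fintype.piFinset fun _ => Finset.Icc (0 : ℤ) 1 := by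
  simp only [Fintype.mem_piFinset, Finset.mem_Icc, Pi.sub_apply, zfloor, PiLp.sub_apply]
  intro i
  have h1 := Int.le_floor_add (z i - y i) (y i)
  have h2 := Int.le_floor_add_floor (z i - y i) (y i)
  rw [sub_add_cancel] at h1 h2
  omega

end Cubes

section GenFun

variable {d r : ℕ} {p : ℝ≥0∞}

lemma WNorm_one (f : Euc d → ℂ) : WNorm 1 f = ∑' k, cubeSup f k := by
  simp [WNorm]

lemma MemW01.cubeSup_ne_top {φ : Euc d → ℂ} (hφ : MemW01 φ) (k : Fin d → ℤ) :
    cubeSup φ k ≠ ∞ :=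
  ((cubeSup_le_WNorm le_rfl φ k).trans_lt hφ.2).ne

lemma MemW01.summable_toReal_cubeSup {φ : Euc d → ℂ} (hφ : MemW01 φ) :
    Summable fun k => (cubeSup φ k).toReal :=
  ENNReal.summable_toReal ((WNorm_one φ).symm ▸ hφ.2.ne)

lemma WNormVec_ne_top {Φ : Fin r → Euc d → ℂ} (hΦ : ∀ i, MemW01 (Φ i)) : WNormVec Φ ≠ ∞ :=
  (ENNReal.sum_lt_top.mpr fun i _ => (hΦ i).2).ne

lemma lpNorm_le_vlpNorm (C : Fin r → (Fin d → ℤ) → ℂ) (i : Fin r) :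
    lpNorm p (C i) ≤ vlpNorm p C :=
  Finset.single_le_sum (f := fun i => lpNorm p (C i)) (fun _ _ => zero_le) (Finset.mem_univ i)

lemma nnnorm_genFun_le (Φ : Fin r → Euc d → ℂ) (C : Fin r → (Fin d → ℤ) → ℂ) (x : Euc d) :
    (‖genFun Φ C x‖₊ : ℝ≥0∞) ≤ ∑' m, ∑ i, ‖C i m‖₊ * (‖Φ i (x - zemb m)‖₊ : ℝ≥0∞) := by
  refine (enorm_tsum_le_tsum_enorm (f := fun m => ∑ i, C i m * Φ i (x - zemb m))).trans
    (ENNReal.tsum_le_tsum fun m => ?_)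
  exact (enorm_sum_le _ _).trans_eq (Finset.sum_congr rfl fun i _ => enorm_mul _ _)

lemma cubeSup_genFun_le (Φ : Fin r → Euc d → ℂ) (C : Fin r → (Fin d → ℤ) → ℂ) (k : Fin d → ℤ) :
    cubeSup (genFun Φ C) k ≤ ∑ i, ∑' m, cubeSup (Φ i) m * ‖C i (k - m)‖₊ := by
  have hae : ∀ᵐ x ∂volume.restrict (unitCube d), ∀ m i,
      (‖Φ i (x + zemb m)‖₊ : ℝ≥0∞) ≤ cubeSup (Φ i) m :=
    ae_all_iff.mpr fun m => ae_all_iff.mpr fun i => ENNReal.ae_le_essSup _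
  refine essSup_le_of_ae_le _ ?_
  filter_upwards [hae] with x hx
  calc (‖genFun Φ C (x + zemb k)‖₊ : ℝ≥0∞)
      ≤ ∑' m, ∑ i, ‖C i m‖₊ * (‖Φ i (x + zemb k - zemb m)‖₊ : ℝ≥0∞) := nnnorm_genFun_le Φ C _
    _ = ∑' m, ∑ i, ‖C i (k - m)‖₊ * (‖Φ i (x + zemb m)‖₊ : ℝ≥0∞) := by
        have hshift (m : Fin d → ℤ) : x + zemb k - zemb (k - m) = x + zemb m := by
          rw [zemb_sub]; abel
        rw [← (Equiv.subLeft k).tsum_eq]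
        simp only [Equiv.subLeft_apply, hshift]
    _ ≤ ∑' m, ∑ i, cubeSup (Φ i) m * ‖C i (k - m)‖₊ := by
        refine ENNReal.tsum_le_tsum fun m => Finset.sum_le_sum fun i _ => ?_
        rw [mul_comm]
        gcongr
        exact hx m i
    _ = ∑ i, ∑' m, cubeSup (Φ i) m * ‖C i (k - m)‖₊ :=
        Summable.tsum_finsetSum fun i _ => ENNReal.summable

lemma WNorm_genFun_le (hp : 1 ≤ p) (Φ : Fin r → Euc d → ℂ) (C : Fin r → (Fin d → ℤ) → ℂ) :
    WNorm p (genFun Φ C) ≤ WNormVec Φ * vlpNorm p C := by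
  calc WNorm p (genFun Φ C)
      ≤ ennLpNorm p (∑ i, fun k => ∑' m, cubeSup (Φ i) m * ‖C i (k - m)‖₊) := by
        rw [WNorm_eq_ennLpNorm]
        exact ennLpNorm_mono fun k => (cubeSup_genFun_le Φ C k).trans_eq (by simp)
    _ ≤ ∑ i, WNorm 1 (Φ i) * lpNorm p (C i) := by
        refine (ennLpNorm_finsetSum_le hp _ _).trans (Finset.sum_le_sum fun i _ => ?_)
        rw [WNorm_one, lpNorm_eq_ennLpNorm]
        exact ennLpNorm_conv_le hp _ _
    _ ≤ WNormVec Φ * vlpNorm p C := by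
        rw [WNormVec, Finset.sum_mul]
        gcongr with i
        exact lpNorm_le_vlpNorm C i

lemma MemW01.norm_le_toReal_cubeSup {φ : Euc d → ℂ} (hφ : MemW01 φ) (x : Euc d) :
    ‖φ x‖ ≤ (cubeSup φ (zfloor x)).toReal := by
  rw [← ENNReal.ofReal_le_iff_le_toReal (hφ.cubeSup_ne_top _), ofReal_norm]
  exact nnnorm_le_cubeSup_zfloor hφ.1 x

/-- On the ball of radius `1` around `x₀`, `|φ_i(x - m)|` is bounded by the essential suprema of
`φ_i` on the `3^d` cubes around `⌊x₀⌋ - m`: a Weierstrass bound, uniform on that ball. -/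
lemma continuous_genFun {Φ : Fin r → Euc d → ℂ} (hΦ : ∀ i, MemW01 (Φ i))
    {C : Fin r → (Fin d → ℤ) → ℂ} {b : ℝ} (hC : ∀ i m, ‖C i m‖ ≤ b) :
    Continuous (genFun Φ C) := by
  refine continuous_iff_continuousAt.mpr fun x₀ => ?_
  set T := Fintype.piFinset fun _ : Fin d => Finset.Icc (-1 : ℤ) 1
  set u : (Fin d → ℤ) → ℝ := fun m =>
    ∑ i, b * ∑ e ∈ T, (cubeSup (Φ i) (zfloor x₀ - m + e)).toReal
  have hu : Summable u := summable_sum fun i _ => (summable_sum fun e _ =>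
    ((Equiv.subLeft (zfloor x₀)).trans (Equiv.addRight e)).summable_iff.mpr
      (hΦ i).summable_toReal_cubeSup).mul_left b
  have hbound (m : Fin d → ℤ) (x : Euc d) (hx : x ∈ Metric.ball x₀ 1) :
      ‖∑ i, C i m * Φ i (x - zemb m)‖ ≤ u m := by
    have he : zfloor x - zfloor x₀ ∈ T := zfloor_sub_zfloor_mem_of_dist_lt hx
    refine (norm_sum_le _ _).trans (Finset.sum_le_sum fun i _ => ?_)
    rw [norm_mul]
    refine mul_le_mul (hC i m) ?_ (norm_nonneg _) ((norm_nonneg _).trans (hC i m))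
    calc ‖Φ i (x - zemb m)‖ ≤ (cubeSup (Φ i) (zfloor x₀ - m + (zfloor x - zfloor x₀))).toReal := by
          have h := (hΦ i).norm_le_toReal_cubeSup (x - zemb m)
          rwa [zfloor_sub_zemb, show zfloor x - m = zfloor x₀ - m + (zfloor x - zfloor x₀) by
            abel] at h
      _ ≤ ∑ e ∈ T, (cubeSup (Φ i) (zfloor x₀ - m + e)).toReal :=
          Finset.single_le_sum (f := fun e => (cubeSup (Φ i) (zfloor x₀ - m + e)).toReal)
            (fun _ _ => ENNReal.toReal_nonneg) he
  have hcont (m : Fin d → ℤ) : Continuous fun x => ∑ i, C i m * Φ i (x - zemb m) := by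
    have := fun i => (hΦ i).1
    fun_prop
  exact (continuousOn_tsum (fun m => (hcont m).continuousOn) hu hbound).continuousAt
    (Metric.ball_mem_nhds x₀ one_pos)

end GenFun

section ComplexMeasures

variable {α : Type*} [MeasurableSpace α]

lemma jordanDecomposition_add_eq (s t : SignedMeasure α) :
    (s + t).toJordanDecomposition.posPart +
        (s.toJordanDecomposition.negPart + t.toJordanDecomposition.negPart) =
      (s + t).toJordanDecomposition.negPart +
        (s.toJordanDecomposition.posPart + t.toJordanDecomposition.posPart) := by
  have h (u : SignedMeasure α) : u.toJordanDecomposition.posPart.toSignedMeasure -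
      u.toJordanDecomposition.negPart.toSignedMeasure = u :=
    u.toSignedMeasure_toJordanDecomposition
  rw [← Measure.toSignedMeasure_eq_toSignedMeasure_iff]
  simp only [Measure.toSignedMeasure_add]
  linear_combination (norm := abel) h (s + t) - h s - h t

lemma integral_jordanDecomposition_add (s t : SignedMeasure α) {g : α → ℂ}
    (hg : ∀ (ρ : Measure α) [IsFiniteMeasure ρ], Integrable g ρ) :
    (∫ x, g x ∂(s + t).toJordanDecomposition.posPart) -
        ∫ x, g x ∂(s + t).toJordanDecomposition.negPart =
      ((∫ x, g x ∂s.toJordanDecomposition.posPart) -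
          ∫ x, g x ∂s.toJordanDecomposition.negPart) +
        ((∫ x, g x ∂t.toJordanDecomposition.posPart) -
          ∫ x, g x ∂t.toJordanDecomposition.negPart) := by
  have h := congrArg (fun ρ => ∫ x, g x ∂ρ) (jordanDecomposition_add_eq s t)
  simp only [integral_add_measure (hg _) (hg _)] at h
  linear_combination h

/-- `cInt ν g = (∫ g ∂P₀ - ∫ g ∂P₁) + I (∫ g ∂P₂ - ∫ g ∂P₃)` for `P = jordanParts ν`. -/
def jordanParts (ν : ComplexMeasure α) : Fin 4 → Measure α :=
  ![(ComplexMeasure.re ν).toJordanDecomposition.posPart,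
    (ComplexMeasure.re ν).toJordanDecomposition.negPart,
    (ComplexMeasure.im ν).toJordanDecomposition.posPart,
    (ComplexMeasure.im ν).toJordanDecomposition.negPart]

variable {d : ℕ}

lemma nnnorm_apply_le_cmNorm (ν : ComplexMeasure (Euc d)) {A : Set (Euc d)}
    (hA : MeasurableSet A) : (‖ν A‖₊ : ℝ≥0∞) ≤ cmNorm ν := by
  refine le_iSup_of_le 1 (le_iSup_of_le (fun _ => A) (le_iSup_of_le (fun _ => hA) ?_))
  exact le_iSup_of_le Subsingleton.pairwise (by simp)

/-- Both Jordan parts of `s` are carried by a Hahn set or its complement, where `s` is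
dominated by `ν`. -/
lemma jordanDecomposition_univ_le_cmNorm {ν : ComplexMeasure (Euc d)} {s : SignedMeasure (Euc d)}
    (hs : ∀ A, MeasurableSet A → |s A| ≤ ‖ν A‖) :
    s.toJordanDecomposition.posPart univ ≤ cmNorm ν ∧
      s.toJordanDecomposition.negPart univ ≤ cmNorm ν := by
  obtain ⟨i, hi, hpos_i, hneg_i, hpos, hneg⟩ := s.toJordanDecomposition_spec
  have hbound {A : Set (Euc d)} (hA : MeasurableSet A) {a : ℝ} (ha : a ≤ |s A|) :
      ENNReal.ofReal a ≤ cmNorm ν :=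
    ((ENNReal.ofReal_le_ofReal (ha.trans (hs A hA))).trans_eq (ofReal_norm _)).trans
      (nnnorm_apply_le_cmNorm ν hA)
  constructor
  · rw [hpos, SignedMeasure.toMeasureOfZeroLE_apply _ hpos_i hi .univ,
      ← ENNReal.ofReal_eq_coe_nnreal]
    exact hbound (hi.inter .univ) (le_abs_self _)
  · rw [hneg, SignedMeasure.toMeasureOfLEZero_apply _ hneg_i hi.compl .univ,
      ← ENNReal.ofReal_eq_coe_nnreal]
    exact hbound (hi.compl.inter .univ) (neg_le_abs _)

lemma jordanParts_univ_le (ν : ComplexMeasure (Euc d)) (k : Fin 4) :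
    jordanParts ν k univ ≤ cmNorm ν := by
  have hre := jordanDecomposition_univ_le_cmNorm (ν := ν) (s := ComplexMeasure.re ν)
    fun A _ => Complex.abs_re_le_norm (ν A)
  have him := jordanDecomposition_univ_le_cmNorm (ν := ν) (s := ComplexMeasure.im ν)
    fun A _ => Complex.abs_im_le_norm (ν A)
  fin_cases k
  exacts [hre.1, hre.2, him.1, him.2]

lemma nnnorm_cInt_le (ν : ComplexMeasure (Euc d)) (g : Euc d → ℂ) :
    (‖cInt ν g‖₊ : ℝ≥0∞) ≤ ∑ k, ∫⁻ x, ‖g x‖₊ ∂jordanParts ν k := by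
  set A : Fin 4 → ℂ := fun k => ∫ x, g x ∂jordanParts ν k
  have hcInt : cInt ν g = (A 0 - A 1) + Complex.I * (A 2 - A 3) := rfl
  have hI : ‖Complex.I‖ₑ = 1 := by simp [enorm_eq_nnnorm]
  calc (‖cInt ν g‖₊ : ℝ≥0∞) ≤ (‖A 0‖ₑ + ‖A 1‖ₑ) + (‖A 2‖ₑ + ‖A 3‖ₑ) := by
        rw [hcInt]
        calc ‖(A 0 - A 1) + Complex.I * (A 2 - A 3)‖ₑ
            ≤ ‖A 0 - A 1‖ₑ + ‖Complex.I * (A 2 - A 3)‖ₑ := enorm_add_le _ _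
          _ = ‖A 0 - A 1‖ₑ + ‖A 2 - A 3‖ₑ := by rw [enorm_mul, hI, one_mul]
          _ ≤ _ := add_le_add enorm_sub_le enorm_sub_le
    _ = ∑ k, ‖A k‖ₑ := by rw [Fin.sum_univ_four, add_assoc, add_assoc, add_assoc]
    _ ≤ ∑ k, ∫⁻ x, ‖g x‖₊ ∂jordanParts ν k :=
        Finset.sum_le_sum fun k _ => enorm_integral_le_lintegral_enorm _

lemma cInt_add (ν₁ ν₂ : ComplexMeasure (Euc d)) {g : Euc d → ℂ}
    (hg : ∀ (ρ : Measure (Euc d)) [IsFiniteMeasure ρ], Integrable g ρ) :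
    cInt (ν₁ + ν₂) g = cInt ν₁ g + cInt ν₂ g := by
  simp only [cInt, map_add, integral_jordanDecomposition_add _ _ hg]
  ring

end ComplexMeasures

section Sampling

variable {d : ℕ} {J : Type*} {X : J → Euc d} {p : ℝ≥0∞}

lemma measurable_zfloor : Measurable (zfloor : Euc d → Fin d → ℤ) :=
  measurable_pi_lambda _ fun i => Int.measurable_floor.comp (by fun_prop)

lemma norm_le_sqrt_of_mem_unitCube {x : Euc d} (hx : x ∈ unitCube d) : ‖x‖ ≤ √d := by
  rw [EuclideanSpace.norm_eq]
  gcongr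
  calc ∑ i, ‖x i‖ ^ 2 ≤ ∑ _i : Fin d, (1 : ℝ) := by
        gcongr with i
        rw [Real.norm_eq_abs, abs_of_nonneg (hx i).1]
        exact pow_le_one₀ (hx i).1 (hx i).2
    _ = d := by simp

/-- A `δ`-separated family has boundedly many points in each unit cube, since the disjoint balls
of radius `δ / 2` around them fit into one ball of radius `√d + δ / 2`. -/
lemma SeparatedWith.exists_card_le {δ : ℝ} (hδ : 0 < δ) (hsep : SeparatedWith X δ) :
    ∃ N : ℕ, ∀ k (s : Finset J), (∀ j ∈ s, zfloor (X j) = k) → s.card ≤ N := by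
  classical
  set r := δ / 2
  set R := √d + r
  set v := volume (Metric.ball (0 : Euc d) r)
  set V := volume (Metric.ball (0 : Euc d) R)
  have hv : v ≠ 0 := (Metric.measure_ball_pos _ _ (by positivity)).ne'
  refine ⟨⌈(V / v).toReal⌉₊, fun k s hs => ?_⟩
  have hdisj : (s : Set J).PairwiseDisjoint fun j => Metric.ball (X j) r :=
    fun i _ j _ hij =>
      Metric.ball_disjoint_ball (by linarith [hsep i j hij, show r = δ / 2 from rfl])
  have hsub : ⋃ j ∈ s, Metric.ball (X j) r ⊆ Metric.ball (zemb k) R := by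
    refine iUnion₂_subset fun j hj y hy => ?_
    have hXj : dist (X j) (zemb k) ≤ √d := by
      rw [dist_eq_norm, ← hs j hj]
      exact norm_le_sqrt_of_mem_unitCube (sub_zemb_zfloor_mem_unitCube _)
    rw [Metric.mem_ball] at hy ⊢
    linarith [dist_triangle y (X j) (zemb k)]
  have hcard : s.card * v ≤ V :=
    calc s.card * v = ∑ j ∈ s, volume (Metric.ball (X j) r) := by
          simp [v, Measure.addHaar_ball_center]
      _ = volume (⋃ j ∈ s, Metric.ball (X j) r) :=
          (measure_biUnion_finset hdisj fun _ _ => measurableSet_ball).symm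
      _ ≤ volume (Metric.ball (zemb k) R) := measure_mono hsub
      _ = V := Measure.addHaar_ball_center _ _ _
  have hle : (s.card : ℝ) ≤ (V / v).toReal := by
    have h := (ENNReal.le_div_iff_mul_le (.inl hv) (.inl measure_ball_lt_top.ne)).mpr hcard
    simpa using ENNReal.toReal_mono (ENNReal.div_lt_top measure_ball_lt_top.ne hv).ne h
  exact_mod_cast hle.trans (Nat.le_ceil _)

/-- Writing `⌊z - y⌋ = ⌊z⌋ - ⌊y⌋ - e` with `e ∈ {0,1}^d` turns the integral into a discrete
convolution of `ρ ∘ ⌊·⌋⁻¹` with the `2^d`-fold shifted `cubeSup f`, evaluated at `⌊x_j⌋`. -/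
lemma ennLpNorm_lintegral_le {N : ℕ}
    (hN : ∀ k (s : Finset J), (∀ j ∈ s, zfloor (X j) = k) → s.card ≤ N) (hp : 1 ≤ p)
    {f : Euc d → ℂ} (hf : Continuous f) (ρ : Measure (Euc d)) :
    ennLpNorm p (fun j => ∫⁻ y, ‖f (X j - y)‖₊ ∂ρ) ≤ N * 2 ^ d * ρ univ * WNorm p f := by
  set E := Fintype.piFinset fun _ : Fin d => Finset.Icc (0 : ℤ) 1
  set G : (Fin d → ℤ) → ℝ≥0∞ := fun k => ∑ e ∈ E, cubeSup f (k - e)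
  set w : (Fin d → ℤ) → ℝ≥0∞ := fun m => ρ.map zfloor {m}
  have hpt (z y : Euc d) : (‖f (z - y)‖₊ : ℝ≥0∞) ≤ G (zfloor z - zfloor y) := by
    refine (nnnorm_le_cubeSup_zfloor hf _).trans ?_
    rw [← sub_sub_cancel (zfloor z - zfloor y) (zfloor (z - y))]
    exact Finset.single_le_sum (f := fun e => cubeSup f (zfloor z - zfloor y - e))
      (fun _ _ => zero_le) (zfloor_sub_sub_zfloor_mem z y)
  have hint (z : Euc d) : ∫⁻ y, ‖f (z - y)‖₊ ∂ρ ≤ ∑' m, w m * G (zfloor z - m) :=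
    calc ∫⁻ y, ‖f (z - y)‖₊ ∂ρ ≤ ∫⁻ y, G (zfloor z - zfloor y) ∂ρ := lintegral_mono (hpt z)
      _ = ∫⁻ m, G (zfloor z - m) ∂ρ.map zfloor :=
          (lintegral_map (f := fun m => G (zfloor z - m)) .of_discrete measurable_zfloor).symm
      _ = ∑' m, w m * G (zfloor z - m) := by
          simp only [lintegral_countable', w, mul_comm]
  have hw : ∑' m, w m = ρ univ := by
    simpa [Measure.map_apply measurable_zfloor .univ] using
      (lintegral_countable' (μ := ρ.map zfloor) fun _ => (1 : ℝ≥0∞)).symm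
  have hG : ennLpNorm p G ≤ 2 ^ d * WNorm p f := by
    calc ennLpNorm p G ≤ ∑ e ∈ E, ennLpNorm p fun k => cubeSup f (k - e) := by
          convert ennLpNorm_finsetSum_le hp E fun e k => cubeSup f (k - e) using 2
          ext k; simp [G]
      _ = 2 ^ d * WNorm p f := by
          simp [ennLpNorm_comp_sub_right, WNorm_eq_ennLpNorm, E]
  calc ennLpNorm p (fun j => ∫⁻ y, ‖f (X j - y)‖₊ ∂ρ)
      ≤ ennLpNorm p ((fun k => ∑' m, w m * G (k - m)) ∘ (zfloor ∘ X)) :=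
        ennLpNorm_mono fun j => hint (X j)
    _ ≤ N * ennLpNorm p (fun k => ∑' m, w m * G (k - m)) := ennLpNorm_comp_le hN hp _
    _ ≤ N * (ρ univ * (2 ^ d * WNorm p f)) := by
        gcongr
        exact (ennLpNorm_conv_le hp w G).trans (by rw [hw]; gcongr)
    _ = N * 2 ^ d * ρ univ * WNorm p f := by ring

lemma lpNorm_mconv_le {N : ℕ}
    (hN : ∀ k (s : Finset J), (∀ j ∈ s, zfloor (X j) = k) → s.card ≤ N) (hp : 1 ≤ p)
    {f : Euc d → ℂ} (hf : Continuous f) (ν : ComplexMeasure (Euc d)) :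
    lpNorm p (fun j => mconv ν f (X j)) ≤ 4 * N * 2 ^ d * cmNorm ν * WNorm p f := by
  rw [lpNorm_eq_ennLpNorm]
  calc ennLpNorm p (fun j => (‖mconv ν f (X j)‖₊ : ℝ≥0∞))
      ≤ ennLpNorm p (∑ k, fun j => ∫⁻ y, ‖f (X j - y)‖₊ ∂jordanParts ν k) :=
        ennLpNorm_mono fun j => (nnnorm_cInt_le ν _).trans_eq (by simp)
    _ ≤ ∑ k, ennLpNorm p (fun j => ∫⁻ y, ‖f (X j - y)‖₊ ∂jordanParts ν k) :=
        ennLpNorm_finsetSum_le hp _ _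
    _ ≤ ∑ _k : Fin 4, N * 2 ^ d * cmNorm ν * WNorm p f := by
        gcongr with k
        exact (ennLpNorm_lintegral_le hN hp hf _).trans (by gcongr; exact jordanParts_univ_le ν k)
    _ = 4 * N * 2 ^ d * cmNorm ν * WNorm p f := by
        simp only [Finset.sum_const, Finset.card_univ, Fintype.card_fin, nsmul_eq_mul]
        ring

end Sampling

section Perturbation

variable {d r t : ℕ} {p : ℝ≥0∞} {Φ : Fin r → Euc d → ℂ} {C : Fin r → (Fin d → ℤ) → ℂ}

lemma norm_le_toReal_vlpNorm (hp : 1 ≤ p) (hC : vlpNorm p C < ∞) (i : Fin r) (m : Fin d → ℤ) :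
    ‖C i m‖ ≤ (vlpNorm p C).toReal := by
  rw [← ENNReal.ofReal_le_iff_le_toReal hC.ne, ofReal_norm]
  exact (le_ennLpNorm hp _ m).trans (lpNorm_le_vlpNorm C i)

lemma continuous_genFun_of_vlpNorm_lt_top (hp : 1 ≤ p) (hΦ : ∀ i, MemW01 (Φ i))
    (hC : vlpNorm p C < ∞) : Continuous (genFun Φ C) :=
  continuous_genFun hΦ (norm_le_toReal_vlpNorm hp hC)

lemma norm_genFun_le (hp : 1 ≤ p) (hΦ : ∀ i, MemW01 (Φ i)) (hC : vlpNorm p C < ∞)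
    (x : Euc d) : ‖genFun Φ C x‖ ≤ (WNormVec Φ * vlpNorm p C).toReal := by
  rw [← ENNReal.ofReal_le_iff_le_toReal (ENNReal.mul_ne_top (WNormVec_ne_top hΦ) hC.ne),
    ofReal_norm]
  exact (nnnorm_le_WNorm hp (continuous_genFun_of_vlpNorm_lt_top hp hΦ hC) x).trans
    (WNorm_genFun_le hp Φ C)

lemma mconv_add {f : Euc d → ℂ} (hf : Continuous f) {B : ℝ} (hB : ∀ x, ‖f x‖ ≤ B)
    (ν₁ ν₂ : ComplexMeasure (Euc d)) (x : Euc d) :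
    mconv (ν₁ + ν₂) f x = mconv ν₁ f x + mconv ν₂ f x :=
  cInt_add ν₁ ν₂ fun _ _ =>
    Integrable.of_bound (by fun_prop : Continuous fun y => f (x - y)).aestronglyMeasurable B
      (ae_of_all _ fun y => hB (x - y))

lemma RieszCond.eLpNorm_genFun_lt_top (hR : RieszCond p Φ) (hC : vlpNorm p C < ∞) :
    eLpNorm (genFun Φ C) p volume < ∞ := by
  obtain ⟨m, M, -, -, hRiesz⟩ := hR
  exact (hRiesz C hC).2.trans_lt (ENNReal.mul_lt_top ENNReal.ofReal_lt_top hC)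

lemma RieszWith.vlpNorm_le {m M : ℝ} (hR : RieszWith p Φ m M) (hC : vlpNorm p C < ∞) :
    vlpNorm p C ≤ (ENNReal.ofReal m)⁻¹ * eLpNorm (genFun Φ C) p volume := by
  have hm : ENNReal.ofReal m ≠ 0 := ENNReal.ofReal_pos.mpr hR.1 |>.ne'
  calc vlpNorm p C = (ENNReal.ofReal m)⁻¹ * (ENNReal.ofReal m * vlpNorm p C) := by
        rw [← mul_assoc, ENNReal.inv_mul_cancel hm ENNReal.ofReal_ne_top, one_mul]
    _ ≤ _ := by gcongr; exact (hR.2.2 C hC).1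

lemma exists_sum_lpNorm_mconv_le (hp : 1 ≤ p) (hΦ : ∀ i, MemW01 (Φ i)) (hR : RieszCond p Φ)
    {J : Type*} {X : J → Euc d} (hsep : SeparatedSet X) :
    ∃ K : ℝ≥0, ∀ (ν : Fin t → ComplexMeasure (Euc d)) (C : Fin r → (Fin d → ℤ) → ℂ),
      vlpNorm p C < ∞ → ∑ l, lpNorm p (fun j => mconv (ν l) (genFun Φ C) (X j)) ≤
        K * cmNormVec ν * eLpNorm (genFun Φ C) p volume := by
  obtain ⟨m, M, hRiesz⟩ := hR
  obtain ⟨δ, hδ, hsepδ⟩ := hsep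
  obtain ⟨N, hN⟩ := hsepδ.exists_card_le hδ
  set K : ℝ≥0∞ := 4 * N * 2 ^ d * (WNormVec Φ * (ENNReal.ofReal m)⁻¹)
  have hK : K ≠ ∞ := by
    have hW := WNormVec_ne_top hΦ
    have hm : (ENNReal.ofReal m)⁻¹ ≠ ∞ :=
      ENNReal.inv_ne_top.mpr (ENNReal.ofReal_pos.mpr hRiesz.1).ne'
    finiteness
  refine ⟨K.toNNReal, fun ν C hC => ?_⟩
  rw [ENNReal.coe_toNNReal hK]
  have hW : WNorm p (genFun Φ C) ≤
      WNormVec Φ * (ENNReal.ofReal m)⁻¹ * eLpNorm (genFun Φ C) p volume := by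
    rw [mul_assoc]
    exact (WNorm_genFun_le hp Φ C).trans (by gcongr; exact hRiesz.vlpNorm_le hC)
  calc ∑ l, lpNorm p (fun j => mconv (ν l) (genFun Φ C) (X j))
      ≤ ∑ l, 4 * N * 2 ^ d * cmNorm (ν l) * WNorm p (genFun Φ C) :=
        Finset.sum_le_sum fun l _ =>
          lpNorm_mconv_le hN hp (continuous_genFun_of_vlpNorm_lt_top hp hΦ hC) (ν l)
    _ ≤ ∑ l, 4 * N * 2 ^ d * cmNorm (ν l) *
          (WNormVec Φ * (ENNReal.ofReal m)⁻¹ * eLpNorm (genFun Φ C) p volume) := by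
        gcongr
    _ = K * cmNormVec ν * eLpNorm (genFun Φ C) p volume := by
        simp only [cmNormVec, Finset.mul_sum, Finset.sum_mul, K]
        refine Finset.sum_congr rfl fun l _ => by ring

lemma sum_lpNorm_le_add {ι J : Type*} [Fintype ι] (hp : 1 ≤ p) {u v w : ι → J → ℂ}
    (h : ∀ l j, ‖u l j‖₊ ≤ ‖v l j‖₊ + ‖w l j‖₊) :
    ∑ l, lpNorm p (u l) ≤ ∑ l, lpNorm p (v l) + ∑ l, lpNorm p (w l) := by
  rw [← Finset.sum_add_distrib]
  gcongr with l
  simp only [lpNorm_eq_ennLpNorm]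
  refine (ennLpNorm_mono fun j => ?_).trans (ennLpNorm_add_le hp _ _)
  show (‖u l j‖₊ : ℝ≥0∞) ≤ ‖v l j‖₊ + ‖w l j‖₊
  exact_mod_cast h l j

lemma sampling_bounds_of_perturbation {A B : ℝ} {e sμ sα sν : ℝ≥0∞} (he : e ≠ ∞) (hA : 0 < A)
    (hB : 0 ≤ B) (hlow : ENNReal.ofReal A * e ≤ sμ) (hup : sμ ≤ ENNReal.ofReal B * e)
    (hμ : sμ ≤ sν + sα) (hα : sα ≤ sμ + sν) (hν : sν ≤ ENNReal.ofReal (A / 2) * e) :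
    ENNReal.ofReal (A / 2) * e ≤ sα ∧ sα ≤ ENNReal.ofReal (B + A / 2) * e := by
  have hhalf : ENNReal.ofReal A * e = ENNReal.ofReal (A / 2) * e + ENNReal.ofReal (A / 2) * e := by
    rw [← add_mul, ← ENNReal.ofReal_add (by positivity) (by positivity), add_halves]
  constructor
  · refine (ENNReal.add_le_add_iff_left (a := ENNReal.ofReal (A / 2) * e) (by finiteness)).mp ?_
    rw [← hhalf]
    exact hlow.trans (hμ.trans (add_le_add hν le_rfl))
  · rw [ENNReal.ofReal_add hB (by positivity), add_mul]
    exact hα.trans (add_le_add hup hν)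

end Perturbation

end

open MeasureTheory ENNReal in
theorem stability_under_measure_perturbation_general
    (d r t : ℕ) (p : ℝ≥0∞) (hp : 1 ≤ p) (J : Type)
    (μ : Fin t → ComplexMeasure (Euc d))
    (Φ : Fin r → Euc d → ℂ) (hΦ : ∀ i, MemW01 (Φ i)) (hR : RieszCond p Φ)
    (X : J → Euc d) (hsep : SeparatedSet X)
    (hsamp : SamplingSet p Φ μ X) :
    ∃ ε₀ : ℝ, 0 < ε₀ ∧ ∀ α : Fin t → ComplexMeasure (Euc d),
      cmNormVec (fun l => μ l - α l) < ENNReal.ofReal ε₀ →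
      SamplingSet p Φ α X := by
  obtain ⟨K, hK⟩ := exists_sum_lpNorm_mconv_le (t := t) hp hΦ hR hsep
  obtain ⟨A, B, hA, hAB, hsampAB⟩ := hsamp
  refine ⟨A / (2 * (K + 1)), by positivity, fun α hα =>
    ⟨A / 2, B + A / 2, by positivity, by linarith, fun C hC => ?_⟩⟩
  set f := genFun Φ C
  have hsplit (l : Fin t) (j : J) :
      mconv (μ l) f (X j) = mconv (μ l - α l) f (X j) + mconv (α l) f (X j) := by
    rw [← mconv_add (continuous_genFun_of_vlpNorm_lt_top hp hΦ hC) (norm_genFun_le hp hΦ hC),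
      sub_add_cancel]
  set e := eLpNorm f p volume
  set S : (Fin t → ComplexMeasure (Euc d)) → ℝ≥0∞ :=
    fun ν => ∑ l, lpNorm p (fun j => mconv (ν l) f (X j))
  have hμ : S μ ≤ S (fun l => μ l - α l) + S α :=
    sum_lpNorm_le_add hp fun l j => by rw [hsplit]; exact nnnorm_add_le _ _
  have hα' : S α ≤ S μ + S (fun l => μ l - α l) := sum_lpNorm_le_add hp fun l j => by
    rw [eq_sub_of_add_eq' (hsplit l j).symm]; exact nnnorm_sub_le _ _
  have hKε : (K : ℝ≥0∞) * ENNReal.ofReal (A / (2 * (K + 1))) ≤ ENNReal.ofReal (A / 2) := by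
    rw [← ENNReal.ofReal_coe_nnreal, ← ENNReal.ofReal_mul K.coe_nonneg]
    refine ENNReal.ofReal_le_ofReal ?_
    rw [mul_div_assoc', div_le_div_iff₀ (by positivity) (by positivity)]
    nlinarith [K.coe_nonneg]
  have hν : S (fun l => μ l - α l) ≤ ENNReal.ofReal (A / 2) * e := by
    refine (hK _ C hC).trans ?_
    gcongr
    exact (mul_le_mul_right hα.le _).trans hKε
  exact sampling_bounds_of_perturbation (hR.eLpNorm_genFun_lt_top hC).ne hA (by linarith)
    (hsampAB C hC).1 (hsampAB C hC).2 hμ hα' hν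

open MeasureTheory ENNReal in
/-- Theorem 3.3: stability of sampling under perturbation of the
sampling measures. -/
theorem stability_under_measure_perturbation
    (d r t : ℕ) (p : ℝ≥0∞) (hp : 1 ≤ p) (J : Type) [Countable J]
    (μ : Fin t → ComplexMeasure (Euc d))
    (Φ : Fin r → Euc d → ℂ) (hΦ : ∀ i, MemW01 (Φ i)) (hR : RieszCond p Φ)
    (X : J → Euc d) (hsep : SeparatedSet X)
    (hsamp : SamplingSet p Φ μ X) :
    ∃ ε₀ : ℝ, 0 < ε₀ ∧ ∀ α : Fin t → ComplexMeasure (Euc d),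
      cmNormVec (fun l => μ l - α l) < ENNReal.ofReal ε₀ →
      SamplingSet p Φ α X :=
  stability_under_measure_perturbation_general d r t p hp J μ Φ hΦ hR X hsep hsamp
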